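/- arXiv:2310.05145 — 2 statements merged into one kernel-verified Lean document; each statement's English description precedes it below -/
import Mathlib

section
/- Correctness bound for almost perfectly trained networks: let n ≥ 1 and k ≥ 1 be natural numbers, and let p₁, …, pₙ ∈ (0,1] each satisfy pᵢ ≥ e^{nk}/(1 + e^{nk}). Then n·k + ∑_{i=1}^{n} (−log pᵢ) < n·(k+1). Consequently, for any hypothesis H' with |H'| ≥ k+1 and any probabilities q_e ∈ (0,1], the score n·|H'| + ∑_e (−log q_e) of H' is at least n·(k+1) and therefore strictly exceeds the score of the correct hypothesis of size k. -/
theorem correctness_bound (n k : ℕ) (hn : 1 ≤ n) (hk : 1 ≤ k)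
    (p : Fin n → ℝ) (hp0 : ∀ i, 0 < p i) (hp1 : ∀ i, p i ≤ 1)
    (hperf : ∀ i, Real.exp ((n : ℝ) * k) / (1 + Real.exp ((n : ℝ) * k)) ≤ p i) :
    ((n : ℝ) * k + ∑ i, -Real.log (p i) < n * (k + 1)) ∧
    (∀ (h' : ℕ), k + 1 ≤ h' → ∀ q : Fin n → ℝ,
      (∀ i, 0 < q i ∧ q i ≤ 1) →
      ((n : ℝ) * (k + 1) ≤ (n : ℝ) * h' + ∑ i, -Real.log (q i)) ∧
      ((n : ℝ) * k + ∑ i, -Real.log (p i) <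
        (n : ℝ) * h' + ∑ i, -Real.log (q i))) := by
  have hnk : (1 : ℝ) ≤ (n : ℝ) * k := by
    have : (1 : ℝ) ≤ (n : ℝ) := by exact_mod_cast hn
    have : (1 : ℝ) ≤ (k : ℝ) := by exact_mod_cast hk
    nlinarith [show (1:ℝ) ≤ (n:ℝ) from by exact_mod_cast hn]
  have key : ∀ i, -Real.log (p i) < 1 := by
    intro i
    have hpi := hperf i
    have hepos : 0 < Real.exp ((n : ℝ) * k) := Real.exp_pos _
    have hlb : 0 < Real.exp ((n : ℝ) * k) / (1 + Real.exp ((n : ℝ) * k)) :=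
      div_pos hepos (by linarith)
    have hlog : Real.log (Real.exp ((n : ℝ) * k) / (1 + Real.exp ((n : ℝ) * k)))
        ≤ Real.log (p i) := Real.log_le_log hlb hpi
    have hlogdiv : Real.log (Real.exp ((n : ℝ) * k) / (1 + Real.exp ((n : ℝ) * k)))
        = (n : ℝ) * k - Real.log (1 + Real.exp ((n : ℝ) * k)) := by
      rw [Real.log_div (ne_of_gt hepos) (by positivity), Real.log_exp]
    -- log(1 + e^{nk}) < nk + 1 since 1 + e^{nk} < e^{nk+1}
    have h1 : (1 : ℝ) + Real.exp ((n : ℝ) * k) < Real.exp ((n : ℝ) * k + 1) := by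
      rw [Real.exp_add]
      have he1 : (2 : ℝ) < Real.exp 1 := by
        have := Real.exp_one_gt_d9; linarith
      have h2 : (1 : ℝ) ≤ Real.exp ((n : ℝ) * k) := Real.one_le_exp (by linarith)
      nlinarith
    have h2 : Real.log (1 + Real.exp ((n : ℝ) * k)) < (n : ℝ) * k + 1 := by
      calc Real.log (1 + Real.exp ((n : ℝ) * k))
          < Real.log (Real.exp ((n : ℝ) * k + 1)) :=
            Real.log_lt_log (by positivity) h1
        _ = (n : ℝ) * k + 1 := Real.log_exp _
    linarith [hlog, hlogdiv ▸ hlog]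
  have hsum : ∑ i, -Real.log (p i) < (n : ℝ) := by
    calc ∑ i, -Real.log (p i) < ∑ _i : Fin n, (1 : ℝ) := by
          apply Finset.sum_lt_sum_of_nonempty
          · exact Finset.univ_nonempty_iff.mpr ⟨⟨0, hn⟩⟩
          · intro i _; exact key i
      _ = (n : ℝ) := by simp
  have first : (n : ℝ) * k + ∑ i, -Real.log (p i) < n * (k + 1) := by
    push_cast; linarith
  refine ⟨first, fun h' hh' q hq => ?_⟩
  have hqsum : 0 ≤ ∑ i, -Real.log (q i) := by
    apply Finset.sum_nonneg
    intro i _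
    have := Real.log_nonpos (le_of_lt (hq i).1) (hq i).2
    linarith
  have hh : (n : ℝ) * (k + 1) ≤ (n : ℝ) * h' := by
    have : ((k : ℝ) + 1) ≤ (h' : ℝ) := by exact_mod_cast hh'
    have hn0 : (0 : ℝ) ≤ (n : ℝ) := by positivity
    nlinarith
  constructor
  · linarith
  · have : ((n : ℝ)) * (k + 1) = (n : ℝ) * ((k : ℕ) + 1 : ℕ) := by push_cast; ring
    push_cast at first ⊢
    linarith
end

section
/- Strict improvement of semantic loss under probability improvement toward a common atom: let 𝒜 be a nonempty family of subsets of {1,…,n} such that index j belongs to every S ∈ 𝒜, and let p, p' ∈ (0,1)^n agree on all coordinates except j with p'_j > p_j. Then ∑_{S∈𝒜} ∏_{i∈S} p'ᵢ ∏_{i∉S}(1−p'ᵢ) > ∑_{S∈𝒜} ∏_{i∈S} pᵢ ∏_{i∉S}(1−pᵢ), i.e., the semantic loss strictly decreases. -/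
theorem semantic_sum_strict_mono_common_atom (n : ℕ)
    (𝒜 : Finset (Finset (Fin n))) (h𝒜 : 𝒜.Nonempty) (j : Fin n)
    (hj : ∀ S ∈ 𝒜, j ∈ S) (p p' : Fin n → ℝ)
    (hp : ∀ i, 0 < p i ∧ p i < 1) (hp' : ∀ i, 0 < p' i ∧ p' i < 1)
    (hagree : ∀ i, i ≠ j → p' i = p i) (hj' : p j < p' j) :
    (∑ S ∈ 𝒜, (∏ i ∈ S, p i) * ∏ i ∈ Sᶜ, (1 - p i)) <
      ∑ S ∈ 𝒜, (∏ i ∈ S, p' i) * ∏ i ∈ Sᶜ, (1 - p' i) := by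
  apply Finset.sum_lt_sum_of_nonempty h𝒜
  intro S hS
  have hjS := hj S hS
  have hrest : ∏ i ∈ S.erase j, p' i = ∏ i ∈ S.erase j, p i :=
    Finset.prod_congr rfl fun i hi => hagree i (Finset.ne_of_mem_erase hi)
  have hcomp : ∏ i ∈ Sᶜ, (1 - p' i) = ∏ i ∈ Sᶜ, (1 - p i) := by
    refine Finset.prod_congr rfl fun i hi => ?_
    have : i ≠ j := fun h => (Finset.mem_compl.mp hi) (h ▸ hjS)
    rw [hagree i this]
  rw [← Finset.mul_prod_erase S p hjS, ← Finset.mul_prod_erase S p' hjS,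
    hrest, hcomp]
  have h1 : 0 < ∏ i ∈ S.erase j, p i :=
    Finset.prod_pos fun i _ => (hp i).1
  have h2 : 0 < ∏ i ∈ Sᶜ, (1 - p i) :=
    Finset.prod_pos fun i _ => by linarith [(hp i).2]
  nlinarith [mul_pos (mul_pos (sub_pos.mpr hj') h1) h2]
end
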